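/- arXiv:2601.16514 — 2 statements merged into one kernel-verified Lean document; each statement's English description precedes it below -/
import Mathlib

section
/- Let h(X;θ) = σ(U^⊤ a(X;W)) with θ = (U, vec(W)), where |σ'| ≤ σ_1, the token norms satisfy ‖X_t‖_2 ≤ 1, and ‖q_X‖_2 ≤ 1. Then for every θ, the full parameter gradient satisfies ‖∇_θ h(X;θ)‖_2^2 = ‖∇_U h‖_2^2 + ‖∇_W h‖_F^2 ≤ σ_1^2 (1 + ‖U‖_2^2). Consequently, on any parameter set where ‖U‖_2 ≤ B, the map θ ↦ h(X;θ) is Lipschitz with constant σ_1 √(1 + B²). -/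
open scoped BigOperators

noncomputable section

/-- The softmax map `(σ_s(z))_t = exp(z_t) / ∑_s exp(z_s)`. -/
def softmax {T : ℕ} (z : Fin T → ℝ) : Fin T → ℝ :=
  fun t => Real.exp (z t) / ∑ s, Real.exp (z s)

/-- Euclidean (ℓ²) norm of a finitely indexed real vector. -/
def l2 {ι : Type*} [Fintype ι] (v : ι → ℝ) : ℝ := Real.sqrt (∑ i, v i ^ 2)

/-- ℓ¹ norm. -/
def l1 {ι : Type*} [Fintype ι] (v : ι → ℝ) : ℝ := ∑ i, |v i|

/-- ℓ^∞ norm. -/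
def linf {ι : Type*} [Fintype ι] (v : ι → ℝ) : ℝ := ⨆ i, |v i|

/-- Frobenius norm of a matrix given as a function. -/
def frob {ι κ : Type*} [Fintype ι] [Fintype κ] (A : ι → κ → ℝ) : ℝ :=
  Real.sqrt (∑ i, ∑ j, A i j ^ 2)

/-- Euclidean inner product. -/
def dot {ι : Type*} [Fintype ι] (u v : ι → ℝ) : ℝ := ∑ i, u i * v i

/-- Frobenius inner product. -/
def frobDot {ι κ : Type*} [Fintype ι] [Fintype κ] (A B : ι → κ → ℝ) : ℝ :=
  ∑ i, ∑ j, A i j * B i j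

/-- Jacobian matrix of softmax: `J_s(z) = diag(σ_s(z)) − σ_s(z) σ_s(z)ᵀ`. -/
def softmaxJac {T : ℕ} (z : Fin T → ℝ) : Fin T → Fin T → ℝ :=
  fun s t => (if s = t then softmax z s else 0) - softmax z s * softmax z t

/-- Attention scores `X ᵀ W q ∈ ℝ^T`. -/
def score {d T : ℕ} (X : Fin d → Fin T → ℝ) (W : Fin d → Fin d → ℝ) (q : Fin d → ℝ) :
    Fin T → ℝ :=
  fun t => ∑ i, X i t * (∑ j, W i j * q j)

/-- Attention output `a(X;W) = X σ_s(Xᵀ W q)`. -/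
def attn {d T : ℕ} (X : Fin d → Fin T → ℝ) (W : Fin d → Fin d → ℝ) (q : Fin d → ℝ) :
    Fin d → ℝ :=
  fun i => ∑ t, X i t * softmax (score X W q) t

/-- The matrix `M(X;W) = X J_s(Xᵀ W q) Xᵀ`. -/
def Mmat {d T : ℕ} (X : Fin d → Fin T → ℝ) (W : Fin d → Fin d → ℝ) (q : Fin d → ℝ) :
    Fin d → Fin d → ℝ :=
  fun i j => ∑ s, ∑ t, X i s * softmaxJac (score X W q) s t * X j t

/-- Single head output `h(X;θ) = σ(Uᵀ a(X;W))`. -/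
def hHead {d T : ℕ} (σf : ℝ → ℝ) (X : Fin d → Fin T → ℝ) (q : Fin d → ℝ)
    (U : Fin d → ℝ) (W : Fin d → Fin d → ℝ) : ℝ :=
  σf (dot U (attn X W q))

/-! ### Auxiliary lemmas -/

lemma l2_nonneg' {ι : Type*} [Fintype ι] (v : ι → ℝ) : 0 ≤ l2 v := Real.sqrt_nonneg _

lemma l2_sq' {ι : Type*} [Fintype ι] (v : ι → ℝ) : l2 v ^ 2 = ∑ i, v i ^ 2 :=
  Real.sq_sqrt (by positivity)

lemma frob_nonneg' {ι κ : Type*} [Fintype ι] [Fintype κ] (A : ι → κ → ℝ) : 0 ≤ frob A :=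
  Real.sqrt_nonneg _

lemma frob_sq' {ι κ : Type*} [Fintype ι] [Fintype κ] (A : ι → κ → ℝ) :
    frob A ^ 2 = ∑ i, ∑ j, A i j ^ 2 := Real.sq_sqrt (by positivity)

lemma abs_dot_le' {ι : Type*} [Fintype ι] (u v : ι → ℝ) :
    |∑ i, u i * v i| ≤ l2 u * l2 v := by
  have h : (∑ i, u i * v i) ^ 2 ≤ (l2 u * l2 v) ^ 2 := by
    rw [mul_pow, l2_sq', l2_sq']
    exact Finset.sum_mul_sq_le_sq_mul_sq Finset.univ u v
  calc |∑ i, u i * v i| = Real.sqrt ((∑ i, u i * v i) ^ 2) := (Real.sqrt_sq_eq_abs _).symm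
    _ ≤ Real.sqrt ((l2 u * l2 v) ^ 2) := Real.sqrt_le_sqrt h
    _ = l2 u * l2 v := Real.sqrt_sq (mul_nonneg (l2_nonneg' u) (l2_nonneg' v))

lemma l2_eq_norm' {ι : Type*} [Fintype ι] (v : ι → ℝ) :
    l2 v = ‖(WithLp.equiv 2 (ι → ℝ)).symm v‖ := by
  rw [EuclideanSpace.norm_eq]; simp [l2, sq_abs]

lemma l2_sum_le' {ι α : Type*} [Fintype ι] [Fintype α] (c : α → ℝ) (X : ι → α → ℝ) :
    l2 (fun k => ∑ t, c t * X k t) ≤ ∑ t, |c t| * l2 (fun k => X k t) := by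
  have key : (WithLp.equiv 2 (ι → ℝ)).symm (fun k => ∑ t, c t * X k t)
      = ∑ t, c t • (WithLp.equiv 2 (ι → ℝ)).symm (fun k => X k t) := by
    ext k
    simp
  rw [l2_eq_norm', key]
  refine (norm_sum_le _ _).trans ?_
  refine Finset.sum_le_sum fun t _ => ?_
  rw [norm_smul, Real.norm_eq_abs, ← l2_eq_norm']

lemma l2_add_le' {ι : Type*} [Fintype ι] (v w : ι → ℝ) :
    l2 (fun k => v k + w k) ≤ l2 v + l2 w := by
  have key : (WithLp.equiv 2 (ι → ℝ)).symm (fun k => v k + w k)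
      = (WithLp.equiv 2 (ι → ℝ)).symm v + (WithLp.equiv 2 (ι → ℝ)).symm w := by
    ext k; simp
  rw [l2_eq_norm', key, l2_eq_norm', l2_eq_norm']
  exact norm_add_le _ _

lemma l2_smul' {ι : Type*} [Fintype ι] (c : ℝ) (v : ι → ℝ) :
    l2 (fun i => c * v i) = |c| * l2 v := by
  unfold l2
  rw [← Real.sqrt_sq_eq_abs, ← Real.sqrt_mul (sq_nonneg c), Finset.mul_sum]
  congr 1; exact Finset.sum_congr rfl fun i _ => by ring

lemma l2_matvec_le' {ι κ : Type*} [Fintype ι] [Fintype κ] (A : ι → κ → ℝ) (q : κ → ℝ) :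
    l2 (fun i => ∑ j, A i j * q j) ≤ frob A * l2 q := by
  have h : l2 (fun i => ∑ j, A i j * q j) ^ 2 ≤ (frob A * l2 q) ^ 2 := by
    rw [l2_sq', mul_pow, frob_sq', l2_sq', Finset.sum_mul]
    exact Finset.sum_le_sum fun i _ => Finset.sum_mul_sq_le_sq_mul_sq Finset.univ _ _
  calc l2 (fun i => ∑ j, A i j * q j)
      = Real.sqrt (l2 (fun i => ∑ j, A i j * q j) ^ 2) :=
        (Real.sqrt_sq (l2_nonneg' _)).symm
    _ ≤ Real.sqrt ((frob A * l2 q) ^ 2) := Real.sqrt_le_sqrt h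
    _ = frob A * l2 q := Real.sqrt_sq (mul_nonneg (frob_nonneg' A) (l2_nonneg' q))

lemma softmax_nonneg' {T : ℕ} (z : Fin T → ℝ) (t : Fin T) : 0 ≤ softmax z t := by
  unfold softmax; positivity

lemma softmax_sum' {T : ℕ} (hT : 0 < T) (z : Fin T → ℝ) : ∑ t, softmax z t = 1 := by
  unfold softmax
  rw [← Finset.sum_div]
  apply div_self
  have : (0:ℝ) < ∑ s, Real.exp (z s) := by
    apply Finset.sum_pos (fun s _ => Real.exp_pos _)
    exact Finset.univ_nonempty_iff.mpr ⟨⟨0, hT⟩⟩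
  linarith

lemma softmax_sum_le_one' {T : ℕ} (z : Fin T → ℝ) : ∑ t, softmax z t ≤ 1 := by
  rcases Nat.eq_zero_or_pos T with h | h
  · subst h; simp
  · exact le_of_eq (softmax_sum' h z)

lemma sum_weighted_abs_le' {T : ℕ} (p w : Fin T → ℝ) (hp : ∀ t, 0 ≤ p t) :
    ∑ t, p t * |w t| ≤ Real.sqrt (∑ t, p t) * Real.sqrt (∑ t, p t * w t ^ 2) := by
  have h := Finset.sum_mul_sq_le_sq_mul_sq Finset.univ
    (fun t => Real.sqrt (p t)) (fun t => Real.sqrt (p t) * |w t|)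
  have e1 : ∀ t : Fin T, Real.sqrt (p t) * (Real.sqrt (p t) * |w t|) = p t * |w t| := by
    intro t; rw [← mul_assoc, Real.mul_self_sqrt (hp t)]
  have e2 : ∀ t : Fin T, Real.sqrt (p t) ^ 2 = p t := fun t => Real.sq_sqrt (hp t)
  have e3 : ∀ t : Fin T, (Real.sqrt (p t) * |w t|) ^ 2 = p t * w t ^ 2 := by
    intro t; rw [mul_pow, Real.sq_sqrt (hp t), sq_abs]
  simp only [e1, e2, e3] at h
  calc ∑ t, p t * |w t| = Real.sqrt ((∑ t, p t * |w t|) ^ 2) := by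
        rw [Real.sqrt_sq (Finset.sum_nonneg fun t _ => mul_nonneg (hp t) (abs_nonneg _))]
    _ ≤ Real.sqrt ((∑ t, p t) * ∑ t, p t * w t ^ 2) := Real.sqrt_le_sqrt h
    _ = _ := Real.sqrt_mul (Finset.sum_nonneg fun t _ => hp t) _

/-- Key lemma: softmax-weighted centered combination of unit vectors. -/
lemma lemmaA' {d T : ℕ} (z : Fin T → ℝ) (X : Fin d → Fin T → ℝ)
    (v : Fin T → ℝ) (m : ℝ) (hm : 0 ≤ m)
    (hX : ∀ t, l2 (fun k => X k t) ≤ 1) (hv : ∀ t, |v t| ≤ m) :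
    l2 (fun k => ∑ t, softmax z t * (v t - ∑ u, softmax z u * v u) * X k t) ≤ m := by
  rcases Nat.eq_zero_or_pos T with hT | hT
  · subst hT
    simp only [Finset.univ_eq_empty, Finset.sum_empty]
    rw [show l2 (fun _ : Fin d => (0:ℝ)) = 0 by simp [l2]]
    exact hm
  set p := softmax z with hpdef
  set vb := ∑ u, p u * v u with hvb
  have hsum : ∑ t, p t = 1 := softmax_sum' hT z
  have hpn : ∀ t, 0 ≤ p t := softmax_nonneg' z
  have step1 : l2 (fun k => ∑ t, p t * (v t - vb) * X k t) ≤ ∑ t, p t * |v t - vb| := by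
    refine (l2_sum_le' _ _).trans ?_
    refine Finset.sum_le_sum fun t _ => ?_
    rw [abs_mul, abs_of_nonneg (hpn t)]
    calc p t * |v t - vb| * l2 (fun k => X k t) ≤ p t * |v t - vb| * 1 := by
          apply mul_le_mul_of_nonneg_left (hX t) (mul_nonneg (hpn t) (abs_nonneg _))
      _ = p t * |v t - vb| := by ring
  have step2 : ∑ t, p t * |v t - vb| ≤ Real.sqrt (∑ t, p t * (v t - vb) ^ 2) := by
    have := sum_weighted_abs_le' p (fun t => v t - vb) hpn
    rwa [hsum, Real.sqrt_one, one_mul] at this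
  have step3 : ∑ t, p t * (v t - vb) ^ 2 ≤ m ^ 2 := by
    have expand : ∑ t, p t * (v t - vb) ^ 2
        = (∑ t, p t * v t ^ 2) - 2 * vb * (∑ t, p t * v t) + vb ^ 2 * ∑ t, p t := by
      have e : ∀ t : Fin T, p t * (v t - vb) ^ 2
          = p t * v t ^ 2 - 2 * vb * (p t * v t) + vb ^ 2 * p t := fun t => by ring
      simp_rw [e, Finset.sum_add_distrib, Finset.sum_sub_distrib, ← Finset.mul_sum]
    have h1 : ∑ t, p t * v t ^ 2 ≤ m ^ 2 := by
      calc ∑ t, p t * v t ^ 2 ≤ ∑ t, p t * m ^ 2 := by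
            refine Finset.sum_le_sum fun t _ => ?_
            apply mul_le_mul_of_nonneg_left _ (hpn t)
            calc v t ^ 2 = |v t| ^ 2 := (sq_abs _).symm
              _ ≤ m ^ 2 := by
                apply pow_le_pow_left₀ (abs_nonneg _) (hv t)
        _ = m ^ 2 := by rw [← Finset.sum_mul, hsum, one_mul]
    rw [expand, hsum]
    nlinarith [sq_nonneg vb]
  calc l2 _ ≤ ∑ t, p t * |v t - vb| := step1
    _ ≤ Real.sqrt (∑ t, p t * (v t - vb) ^ 2) := step2
    _ ≤ Real.sqrt (m ^ 2) := Real.sqrt_le_sqrt step3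
    _ = m := Real.sqrt_sq hm

lemma l2_attn_le' {d T : ℕ} (X : Fin d → Fin T → ℝ) (W : Fin d → Fin d → ℝ) (q : Fin d → ℝ)
    (hX : ∀ t, l2 (fun k => X k t) ≤ 1) : l2 (attn X W q) ≤ 1 := by
  have e : attn X W q = fun k => ∑ t, softmax (score X W q) t * X k t := by
    funext k; exact Finset.sum_congr rfl fun t _ => mul_comm _ _
  rw [e]
  refine (l2_sum_le' _ _).trans ?_
  calc ∑ t, |softmax (score X W q) t| * l2 (fun k => X k t)
      ≤ ∑ t, softmax (score X W q) t := by
        refine Finset.sum_le_sum fun t _ => ?_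
        rw [abs_of_nonneg (softmax_nonneg' _ t)]
        calc softmax (score X W q) t * l2 (fun k => X k t)
            ≤ softmax (score X W q) t * 1 :=
              mul_le_mul_of_nonneg_left (hX t) (softmax_nonneg' _ t)
          _ = _ := mul_one _
    _ ≤ 1 := softmax_sum_le_one' _

lemma mU_eq' {d T : ℕ} (X : Fin d → Fin T → ℝ) (W : Fin d → Fin d → ℝ) (q : Fin d → ℝ)
    (U : Fin d → ℝ) (k : Fin d) :
    ∑ j, Mmat X W q k j * U j
      = ∑ s, softmax (score X W q) s *
          ((∑ j, X j s * U j) - ∑ t, softmax (score X W q) t * ∑ j, X j t * U j) * X k s := by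
  unfold Mmat softmaxJac
  simp only [Finset.sum_mul]
  rw [Finset.sum_comm]
  refine Finset.sum_congr rfl fun s _ => ?_
  rw [Finset.sum_comm]
  have inner : ∀ t : Fin T, ∑ j, X k s * (((if s = t then softmax (score X W q) s else 0)
      - softmax (score X W q) s * softmax (score X W q) t)) * X j t * U j
      = X k s * ((if s = t then softmax (score X W q) s else 0)
          - softmax (score X W q) s * softmax (score X W q) t) * ∑ j, X j t * U j := by
    intro t
    rw [Finset.mul_sum]
    exact Finset.sum_congr rfl fun j _ => by ring
  simp only [inner]
  set p := softmax (score X W q)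
  set v : Fin T → ℝ := fun t => ∑ j, X j t * U j with hv
  have : ∀ t : Fin T, X k s * ((if s = t then p s else 0) - p s * p t) * v t
      = (if s = t then p s * v t * X k s else 0) - p s * p t * v t * X k s := by
    intro t; split <;> ring
  simp only [show ∀ t, ∑ j, X j t * U j = v t from fun t => rfl]
  simp only [this, Finset.sum_sub_distrib, Finset.sum_ite_eq, Finset.mem_univ, if_true]
  have hps : ∑ i, p s * p i * v i = p s * ∑ i, p i * v i := by
    rw [Finset.mul_sum]; exact Finset.sum_congr rfl fun i _ => by ring
  rw [← Finset.sum_mul, hps]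
  show p s * v s * X k s - p s * (∑ i, p i * v i) * X k s
      = p s * (v s - ∑ t, p t * v t) * X k s
  ring

lemma score_affine' {d T : ℕ} (X : Fin d → Fin T → ℝ) (q : Fin d → ℝ)
    (A B : Fin d → Fin d → ℝ) (s : ℝ) (t : Fin T) :
    score X (fun i j => A i j + s * B i j) q t = score X A q t + s * score X B q t := by
  unfold score
  rw [Finset.mul_sum, ← Finset.sum_add_distrib]
  refine Finset.sum_congr rfl fun i _ => ?_
  have h : ∑ j, (A i j + s * B i j) * q j
      = (∑ j, A i j * q j) + s * ∑ j, B i j * q j := by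
    rw [Finset.mul_sum, ← Finset.sum_add_distrib]
    exact Finset.sum_congr rfl fun j _ => by ring
  rw [h]; ring

lemma hasDerivAt_g' {d T : ℕ} (hT : 0 < T) (σf : ℝ → ℝ) (hdiff : Differentiable ℝ σf)
    (X : Fin d → Fin T → ℝ) (q : Fin d → ℝ) (U' ΔU : Fin d → ℝ)
    (W' ΔW : Fin d → Fin d → ℝ) (s : ℝ) :
    HasDerivAt (fun r => σf (dot (fun k => U' k + r * ΔU k)
        (attn X (fun i j => W' i j + r * ΔW i j) q)))
      (deriv σf (dot (fun k => U' k + s * ΔU k) (attn X (fun i j => W' i j + s * ΔW i j) q)) *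
        ((∑ k, ΔU k * attn X (fun i j => W' i j + s * ΔW i j) q k) +
         ∑ k, (U' k + s * ΔU k) * ∑ t, X k t *
           (softmax (score X (fun i j => W' i j + s * ΔW i j) q) t *
             (score X ΔW q t -
              ∑ u, softmax (score X (fun i j => W' i j + s * ΔW i j) q) u * score X ΔW q u)))) s := by
  set z0 : Fin T → ℝ := score X W' q with hz0
  set ζ : Fin T → ℝ := score X ΔW q with hζ
  set E : ℝ → Fin T → ℝ := fun r t => Real.exp (z0 t + r * ζ t) with hE
  set S : ℝ → ℝ := fun r => ∑ t, E r t with hS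
  have hSpos : ∀ r, 0 < S r := fun r =>
    Finset.sum_pos (fun t _ => Real.exp_pos _) (Finset.univ_nonempty_iff.mpr ⟨⟨0, hT⟩⟩)
  have hscore : ∀ r t, score X (fun i j => W' i j + r * ΔW i j) q t = z0 t + r * ζ t :=
    fun r t => score_affine' X q W' ΔW r t
  have hsm : ∀ r t, softmax (score X (fun i j => W' i j + r * ΔW i j) q) t = E r t / S r := by
    intro r t
    unfold softmax
    simp only [hscore]
    rfl
  have hEd : ∀ t, HasDerivAt (fun r => E r t) (E s t * ζ t) s := by
    intro t
    have h1 : HasDerivAt (fun r : ℝ => z0 t + r * ζ t) (ζ t) s := by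
      simpa using ((hasDerivAt_id s).mul_const (ζ t)).const_add (z0 t)
    simpa [mul_comm] using h1.exp
  have hSd : HasDerivAt S (∑ t, E s t * ζ t) s := HasDerivAt.fun_sum fun t _ => hEd t
  have hpd : ∀ t, HasDerivAt (fun r => E r t / S r)
      (E s t / S s * (ζ t - ∑ u, E s u / S s * ζ u)) s := by
    intro t
    have h := (hEd t).fun_div hSd (ne_of_gt (hSpos s))
    refine h.congr_deriv ?_
    have hne : S s ≠ 0 := ne_of_gt (hSpos s)
    have hsum : ∑ u, E s u / S s * ζ u = (∑ u, E s u * ζ u) / S s := by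
      rw [Finset.sum_div]
      exact Finset.sum_congr rfl fun u _ => by rw [div_mul_eq_mul_div]
    rw [hsum]
    field_simp
  have had : ∀ k, HasDerivAt (fun r => attn X (fun i j => W' i j + r * ΔW i j) q k)
      (∑ t, X k t * (E s t / S s * (ζ t - ∑ u, E s u / S s * ζ u))) s := by
    intro k
    have e : (fun r => attn X (fun i j => W' i j + r * ΔW i j) q k)
        = fun r => ∑ t, X k t * (E r t / S r) := by
      funext r
      unfold attn
      exact Finset.sum_congr rfl fun t _ => by rw [hsm r t]
    rw [e]
    exact HasDerivAt.fun_sum fun t _ => (hpd t).const_mul (X k t)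
  have hin : HasDerivAt (fun r => dot (fun k => U' k + r * ΔU k)
      (attn X (fun i j => W' i j + r * ΔW i j) q))
      ((∑ k, ΔU k * attn X (fun i j => W' i j + s * ΔW i j) q k) +
       ∑ k, (U' k + s * ΔU k) *
         ∑ t, X k t * (E s t / S s * (ζ t - ∑ u, E s u / S s * ζ u))) s := by
    have e : (fun r => dot (fun k => U' k + r * ΔU k)
        (attn X (fun i j => W' i j + r * ΔW i j) q))
        = fun r => ∑ k, (U' k + r * ΔU k) * attn X (fun i j => W' i j + r * ΔW i j) q k := by
      funext r; rfl
    rw [e, ← Finset.sum_add_distrib]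
    refine HasDerivAt.fun_sum fun k _ => ?_
    have hu : HasDerivAt (fun r : ℝ => U' k + r * ΔU k) (ΔU k) s := by
      simpa using ((hasDerivAt_id s).mul_const (ΔU k)).const_add (U' k)
    exact hu.mul (had k)
  have hcomp := (hdiff _).hasDerivAt.comp s hin
  simp only [hsm]
  exact hcomp

/-- the full parameter gradient of `θ ↦ h(X;θ)` satisfies
`‖∇_U h‖₂² + ‖∇_W h‖_F² ≤ σ₁²(1 + ‖U‖₂²)`, and consequently on any set where
`‖U‖₂ ≤ B` the map `θ ↦ h(X;θ)` is Lipschitz with constant `σ₁ √(1 + B²)`. -/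
theorem head_gradient_bound_and_lipschitz {d T : ℕ}
    (σf : ℝ → ℝ) (σ₁ : ℝ) (hdiff : Differentiable ℝ σf) (hσ' : ∀ x, |deriv σf x| ≤ σ₁)
    (X : Fin d → Fin T → ℝ) (q : Fin d → ℝ)
    (hX : ∀ t, l2 (fun k => X k t) ≤ 1) (hq : l2 q ≤ 1) :
    -- gradient norm bound, for every θ = (U, W)
    (∀ (U : Fin d → ℝ) (W : Fin d → Fin d → ℝ),
      l2 (fun k => deriv σf (dot U (attn X W q)) * attn X W q k) ^ 2 +
      frob (fun k l => deriv σf (dot U (attn X W q)) *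
            ((∑ j, Mmat X W q k j * U j) * q l)) ^ 2
        ≤ σ₁ ^ 2 * (1 + l2 U ^ 2)) ∧
    -- Lipschitz continuity on {‖U‖₂ ≤ B}
    (∀ B : ℝ, ∀ (U U' : Fin d → ℝ) (W W' : Fin d → Fin d → ℝ),
      l2 U ≤ B → l2 U' ≤ B →
      |hHead σf X q U W - hHead σf X q U' W'| ≤
        σ₁ * Real.sqrt (1 + B ^ 2) *
          Real.sqrt (l2 (fun k => U k - U' k) ^ 2 + frob (fun k l => W k l - W' k l) ^ 2)) := by
  have hσ₁ : 0 ≤ σ₁ := le_trans (abs_nonneg _) (hσ' 0)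
  constructor
  · -- Part 1
    intro U W
    set c := deriv σf (dot U (attn X W q)) with hc
    have hc2 : c ^ 2 ≤ σ₁ ^ 2 := by
      have h := hσ' (dot U (attn X W q))
      nlinarith [abs_nonneg c, sq_abs c]
    have t1 : l2 (fun k => c * attn X W q k) ^ 2 = c ^ 2 * l2 (attn X W q) ^ 2 := by
      rw [l2_sq', l2_sq', Finset.mul_sum]
      exact Finset.sum_congr rfl fun k _ => by ring
    have ha : l2 (attn X W q) ^ 2 ≤ 1 := by
      have h := l2_attn_le' X W q hX
      nlinarith [l2_nonneg' (attn X W q)]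
    set mU : Fin d → ℝ := fun k => ∑ j, Mmat X W q k j * U j with hmU
    have t2 : frob (fun k l => c * (mU k * q l)) ^ 2 = c ^ 2 * (l2 mU ^ 2 * l2 q ^ 2) := by
      rw [frob_sq', l2_sq', l2_sq']
      have inner : ∀ k, ∑ l, (c * (mU k * q l)) ^ 2 = c ^ 2 * mU k ^ 2 * ∑ l, q l ^ 2 := by
        intro k; rw [Finset.mul_sum]; exact Finset.sum_congr rfl fun l _ => by ring
      simp only [inner]
      rw [← Finset.sum_mul, ← Finset.mul_sum, mul_assoc]
    have hmUle : l2 mU ≤ l2 U := by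
      have e : mU = fun k => ∑ s, softmax (score X W q) s *
          ((∑ j, X j s * U j) - ∑ t, softmax (score X W q) t * ∑ j, X j t * U j) * X k s := by
        funext k; exact mU_eq' X W q U k
      rw [e]
      refine lemmaA' (score X W q) X (fun t => ∑ j, X j t * U j) (l2 U) (l2_nonneg' U) hX ?_
      intro t
      calc |∑ j, X j t * U j| ≤ l2 (fun j => X j t) * l2 U := abs_dot_le' _ _
        _ ≤ 1 * l2 U := mul_le_mul_of_nonneg_right (hX t) (l2_nonneg' U)
        _ = l2 U := one_mul _
    have hmU2 : l2 mU ^ 2 ≤ l2 U ^ 2 := by nlinarith [l2_nonneg' mU, l2_nonneg' U]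
    have hq2 : l2 q ^ 2 ≤ 1 := by nlinarith [l2_nonneg' q]
    rw [t1, t2]
    nlinarith [sq_nonneg c, sq_nonneg (l2 U), sq_nonneg (l2 mU), sq_nonneg (l2 q),
      mul_le_mul hmU2 hq2 (sq_nonneg (l2 q)) (sq_nonneg (l2 U))]
  · -- Part 2
    intro B U U' W W' hU hU'
    have hB : 0 ≤ B := le_trans (l2_nonneg' U) hU
    set ΔU : Fin d → ℝ := fun k => U k - U' k with hΔU
    set ΔW : Fin d → Fin d → ℝ := fun k l => W k l - W' k l with hΔW
    set R : ℝ := Real.sqrt (l2 ΔU ^ 2 + frob ΔW ^ 2) with hR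
    have hRnn : 0 ≤ R := Real.sqrt_nonneg _
    have hR2 : R ^ 2 = l2 ΔU ^ 2 + frob ΔW ^ 2 := Real.sq_sqrt (by positivity)
    rcases Nat.eq_zero_or_pos T with hT | hT
    · -- T = 0 : h is constant
      subst hT
      have hz : ∀ (V : Fin d → ℝ) (Z : Fin d → Fin d → ℝ), hHead σf X q V Z = σf 0 := by
        intro V Z
        unfold hHead dot attn
        simp
      rw [hz U W, hz U' W', sub_self, abs_zero]
      positivity
    · -- main case
      set g : ℝ → ℝ := fun s => σf (dot (fun k => U' k + s * ΔU k)
          (attn X (fun i j => W' i j + s * ΔW i j) q)) with hg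
      set gd : ℝ → ℝ := fun s =>
        deriv σf (dot (fun k => U' k + s * ΔU k)
            (attn X (fun i j => W' i j + s * ΔW i j) q)) *
          ((∑ k, ΔU k * attn X (fun i j => W' i j + s * ΔW i j) q k) +
           ∑ k, (U' k + s * ΔU k) * ∑ t, X k t *
             (softmax (score X (fun i j => W' i j + s * ΔW i j) q) t *
               (score X ΔW q t -
                ∑ u, softmax (score X (fun i j => W' i j + s * ΔW i j) q) u *
                  score X ΔW q u))) with hgd
      have hg1 : g 1 = hHead σf X q U W := by
        have e1 : (fun k => U' k + (1:ℝ) * ΔU k) = U := by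
          funext k; simp [hΔU]
        have e2 : (fun i j => W' i j + (1:ℝ) * ΔW i j) = W := by
          funext i j; simp [hΔW]
        simp only [hg, e1, e2, hHead]
      have hg0 : g 0 = hHead σf X q U' W' := by
        have e1 : (fun k => U' k + (0:ℝ) * ΔU k) = U' := by funext k; simp
        have e2 : (fun i j => W' i j + (0:ℝ) * ΔW i j) = W' := by funext i j; simp
        simp only [hg, e1, e2, hHead]
      have hbound : ∀ s ∈ Set.Icc (0:ℝ) 1, |gd s| ≤ σ₁ * Real.sqrt (1 + B ^ 2) * R := by
        intro s hs
        obtain ⟨hs0, hs1⟩ := hs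
        set Ws : Fin d → Fin d → ℝ := fun i j => W' i j + s * ΔW i j with hWs
        set Us : Fin d → ℝ := fun k => U' k + s * ΔU k with hUs
        set p := softmax (score X Ws q) with hp
        set ζ : Fin T → ℝ := score X ΔW q with hζ
        -- bound on D1
        have hD1 : |∑ k, ΔU k * attn X Ws q k| ≤ l2 ΔU := by
          calc |∑ k, ΔU k * attn X Ws q k| ≤ l2 ΔU * l2 (attn X Ws q) := abs_dot_le' _ _
            _ ≤ l2 ΔU * 1 :=
              mul_le_mul_of_nonneg_left (l2_attn_le' X Ws q hX) (l2_nonneg' ΔU)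
            _ = l2 ΔU := mul_one _
        -- bound on ζ
        have hζb : ∀ t, |ζ t| ≤ frob ΔW := by
          intro t
          have e : ζ t = ∑ i, X i t * (∑ j, ΔW i j * q j) := rfl
          rw [e]
          calc |∑ i, X i t * (∑ j, ΔW i j * q j)|
              ≤ l2 (fun i => X i t) * l2 (fun i => ∑ j, ΔW i j * q j) := abs_dot_le' _ _
            _ ≤ 1 * (frob ΔW * l2 q) := by
                apply mul_le_mul (hX t) (l2_matvec_le' _ _) (l2_nonneg' _) zero_le_one
            _ = frob ΔW * l2 q := one_mul _
            _ ≤ frob ΔW * 1 := mul_le_mul_of_nonneg_left hq (frob_nonneg' ΔW)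
            _ = frob ΔW := mul_one _
        -- bound on a'
        have ha' : l2 (fun k => ∑ t, X k t * (p t * (ζ t - ∑ u, p u * ζ u))) ≤ frob ΔW := by
          have e : (fun k => ∑ t, X k t * (p t * (ζ t - ∑ u, p u * ζ u)))
              = fun k => ∑ t, p t * (ζ t - ∑ u, p u * ζ u) * X k t := by
            funext k; exact Finset.sum_congr rfl fun t _ => by ring
          rw [e]
          exact lemmaA' (score X Ws q) X ζ (frob ΔW) (frob_nonneg' ΔW) hX hζb
        -- bound on l2 Us
        have hUsB : l2 Us ≤ B := by
          have e : Us = fun k => (1 - s) * U' k + s * U k := by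
            funext k; simp only [hUs, hΔU]; ring
          rw [e]
          calc l2 (fun k => (1 - s) * U' k + s * U k)
              ≤ l2 (fun k => (1 - s) * U' k) + l2 (fun k => s * U k) := l2_add_le' _ _
            _ = |1 - s| * l2 U' + |s| * l2 U := by rw [l2_smul', l2_smul']
            _ = (1 - s) * l2 U' + s * l2 U := by
                rw [abs_of_nonneg (by linarith), abs_of_nonneg hs0]
            _ ≤ (1 - s) * B + s * B := by
                apply add_le_add
                · exact mul_le_mul_of_nonneg_left hU' (by linarith)
                · exact mul_le_mul_of_nonneg_left hU hs0
            _ = B := by ring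
        -- bound on D2
        have hD2 : |∑ k, Us k * ∑ t, X k t * (p t * (ζ t - ∑ u, p u * ζ u))| ≤ B * frob ΔW := by
          calc |∑ k, Us k * ∑ t, X k t * (p t * (ζ t - ∑ u, p u * ζ u))|
              ≤ l2 Us * l2 (fun k => ∑ t, X k t * (p t * (ζ t - ∑ u, p u * ζ u))) :=
                abs_dot_le' _ _
            _ ≤ B * frob ΔW :=
                mul_le_mul hUsB ha' (l2_nonneg' _) hB
        -- combine
        have hcore : |gd s| ≤ σ₁ * (l2 ΔU + B * frob ΔW) := by
          rw [hgd]
          simp only []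
          rw [abs_mul]
          apply mul_le_mul (hσ' _) _ (abs_nonneg _) hσ₁
          calc |(∑ k, ΔU k * attn X Ws q k) +
                ∑ k, Us k * ∑ t, X k t * (p t * (ζ t - ∑ u, p u * ζ u))|
              ≤ |∑ k, ΔU k * attn X Ws q k| +
                |∑ k, Us k * ∑ t, X k t * (p t * (ζ t - ∑ u, p u * ζ u))| := abs_add_le _ _
            _ ≤ l2 ΔU + B * frob ΔW := add_le_add hD1 hD2
        refine hcore.trans ?_
        rw [mul_assoc]
        apply mul_le_mul_of_nonneg_left _ hσ₁
        -- l2 ΔU + B * frob ΔW ≤ √(1+B²) * R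
        set x := l2 ΔU with hx
        set y := frob ΔW with hy
        have hxnn : 0 ≤ x := l2_nonneg' _
        have hynn : 0 ≤ y := frob_nonneg' _
        have hs1 : Real.sqrt (1 + B ^ 2) ^ 2 = 1 + B ^ 2 := Real.sq_sqrt (by positivity)
        have hs1nn : 0 ≤ Real.sqrt (1 + B ^ 2) := Real.sqrt_nonneg _
        have hsq : (x + B * y) ^ 2 ≤ (Real.sqrt (1 + B ^ 2) * R) ^ 2 := by
          rw [mul_pow, hs1, hR2]
          nlinarith [sq_nonneg (y - B * x)]
        calc x + B * y = Real.sqrt ((x + B * y) ^ 2) :=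
              (Real.sqrt_sq (by positivity)).symm
          _ ≤ Real.sqrt ((Real.sqrt (1 + B ^ 2) * R) ^ 2) := Real.sqrt_le_sqrt hsq
          _ = Real.sqrt (1 + B ^ 2) * R := Real.sqrt_sq (by positivity)
      -- mean value inequality
      have hderiv : ∀ s ∈ Set.Icc (0:ℝ) 1,
          HasDerivWithinAt g (gd s) (Set.Icc (0:ℝ) 1) s := by
        intro s _
        exact (hasDerivAt_g' hT σf hdiff X q U' ΔU W' ΔW s).hasDerivWithinAt
      have hmvt := norm_image_sub_le_of_norm_deriv_le_segment_01' hderiv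
        (fun s hs => by
          rw [Real.norm_eq_abs]
          exact hbound s ⟨hs.1, le_of_lt hs.2⟩)
      rw [← hg1, ← hg0]
      calc |g 1 - g 0| = ‖g 1 - g 0‖ := (Real.norm_eq_abs _).symm
        _ ≤ σ₁ * Real.sqrt (1 + B ^ 2) * R := hmvt
end
end

section
/- Let X ∈ ℝ^{d×T} have columns with ‖X_t‖_2 ≤ 1 and let q ∈ ℝ^d with ‖q‖_2 ≤ 1. Define M(W) = X J_s(X^⊤ W q) X^⊤ where J_s is the softmax Jacobian. Then the Fréchet derivative of W ↦ M(W) at any W in direction Δ ∈ ℝ^{d×d} equals ∑_{t=1}^T (Dα[Δ])_t (X_t − μ)(X_t − μ)^⊤, where α = σ_s(X^⊤ W q), μ = Xα, and Dα[Δ] = J_s(X^⊤ W q) X^⊤ Δ q; moreover its Frobenius norm is bounded by ‖DM(W)[Δ]‖_F ≤ 4 ‖Dα[Δ]‖_1 ≤ 8 ‖Δ‖_F. -/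
open scoped BigOperators

noncomputable section

lemma sum_softmax' {T : ℕ} [Nonempty (Fin T)] (z : Fin T → ℝ) : ∑ t, softmax z t = 1 := by
  have hpos : 0 < ∑ s, Real.exp (z s) :=
    Finset.sum_pos (fun _ _ => Real.exp_pos _) Finset.univ_nonempty
  simp only [softmax, ← Finset.sum_div]
  exact div_self hpos.ne'

lemma Dalpha_eq' {T : ℕ} (z c : Fin T → ℝ) (t : Fin T) :
    (∑ u, softmaxJac z t u * c u)
      = softmax z t * c t - softmax z t * ∑ u, softmax z u * c u := by
  unfold softmaxJac
  simp only [sub_mul, Finset.sum_sub_distrib, ite_mul, zero_mul, Finset.sum_ite_eq,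
    Finset.mem_univ, if_true]
  rw [Finset.mul_sum]
  congr 1
  exact Finset.sum_congr rfl fun u _ => by ring

lemma sum_Dalpha_zero' {T : ℕ} (z c : Fin T → ℝ) :
    ∑ t, (softmax z t * c t - softmax z t * ∑ u, softmax z u * c u) = 0 := by
  rcases isEmpty_or_nonempty (Fin T) with h | h
  · simp
  · rw [Finset.sum_sub_distrib, ← Finset.sum_mul, sum_softmax', one_mul, sub_self]

lemma softmax_hasDerivAt' {T : ℕ} (z c : Fin T → ℝ) (τ : Fin T) :
    HasDerivAt (fun s : ℝ => softmax (fun t => z t + s * c t) τ)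
      (softmax z τ * c τ - softmax z τ * ∑ u, softmax z u * c u) 0 := by
  have : Nonempty (Fin T) := ⟨τ⟩
  have hSpos : 0 < ∑ u, Real.exp (z u) :=
    Finset.sum_pos (fun _ _ => Real.exp_pos _) Finset.univ_nonempty
  have hlin : ∀ u : Fin T, HasDerivAt (fun s : ℝ => z u + s * c u) (c u) 0 := fun u => by
    simpa using ((hasDerivAt_id (0:ℝ)).mul_const (c u)).const_add (z u)
  have hnum : HasDerivAt (fun s : ℝ => Real.exp (z τ + s * c τ))
      (Real.exp (z τ + 0 * c τ) * c τ) 0 := (hlin τ).exp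
  have hden : HasDerivAt (fun s : ℝ => ∑ u, Real.exp (z u + s * c u))
      (∑ u, Real.exp (z u + 0 * c u) * c u) 0 :=
    HasDerivAt.fun_sum fun u _ => (hlin u).exp
  have hden0 : (∑ u, Real.exp (z u + 0 * c u)) ≠ 0 := by simpa using hSpos.ne'
  have h := hnum.div hden hden0
  simp only [zero_mul, add_zero] at h
  have hval : (Real.exp (z τ) * c τ * (∑ u, Real.exp (z u))
        - Real.exp (z τ) * ∑ u, Real.exp (z u) * c u) / (∑ u, Real.exp (z u)) ^ 2
      = softmax z τ * c τ - softmax z τ * ∑ u, softmax z u * c u := by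
    unfold softmax
    rw [show (∑ u, Real.exp (z u) / (∑ s, Real.exp (z s)) * c u)
        = (∑ u, Real.exp (z u) * c u) / (∑ s, Real.exp (z s)) by
      rw [Finset.sum_div]; exact Finset.sum_congr rfl fun u _ => by ring]
    field_simp
  rw [← hval]
  exact h.congr_deriv rfl

lemma score_add_smul' {d T : ℕ} (X : Fin d → Fin T → ℝ) (W Δ : Fin d → Fin d → ℝ)
    (q : Fin d → ℝ) (s : ℝ) (t : Fin T) :
    score X (W + s • Δ) q t = score X W q t + s * score X Δ q t := by
  unfold score
  rw [Finset.mul_sum, ← Finset.sum_add_distrib]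
  refine Finset.sum_congr rfl fun i _ => ?_
  have h : (∑ j, (W + s • Δ) i j * q j) = (∑ j, W i j * q j) + s * ∑ j, Δ i j * q j := by
    rw [Finset.mul_sum, ← Finset.sum_add_distrib]
    refine Finset.sum_congr rfl fun j _ => ?_
    simp only [Pi.add_apply, Pi.smul_apply, smul_eq_mul]
    ring
  rw [h]; ring

lemma alg_identity' {T : ℕ} (xi xj σ Dα : Fin T → ℝ) (h0 : ∑ t, Dα t = 0) :
    ∑ a, ∑ b, xi a * ((if a = b then Dα a else 0) - (Dα a * σ b + σ a * Dα b)) * xj b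
    = ∑ t, Dα t * ((xi t - ∑ u, σ u * xi u) * (xj t - ∑ u, σ u * xj u)) := by
  have e1' : ∑ a, ∑ b, (xi a * if a = b then Dα a else 0) * xj b
      = ∑ a, Dα a * xi a * xj a := by
    refine Finset.sum_congr rfl fun a _ => ?_
    simp only [mul_ite, mul_zero, ite_mul, zero_mul, Finset.sum_ite_eq, Finset.mem_univ,
      if_true]
    ring
  have e2 : ∑ a, ∑ b, xi a * (Dα a * σ b) * xj b
      = (∑ a, Dα a * xi a) * (∑ b, σ b * xj b) := by
    rw [Finset.sum_mul_sum]
    exact Finset.sum_congr rfl fun a _ => Finset.sum_congr rfl fun b _ => by ring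
  have e3 : ∑ a, ∑ b, xi a * (σ a * Dα b) * xj b
      = (∑ a, σ a * xi a) * (∑ b, Dα b * xj b) := by
    rw [Finset.sum_mul_sum]
    exact Finset.sum_congr rfl fun a _ => Finset.sum_congr rfl fun b _ => by ring
  have step : ∀ a, ∑ b, xi a * ((if a = b then Dα a else 0) - (Dα a * σ b + σ a * Dα b)) * xj b
      = (∑ b, (xi a * if a = b then Dα a else 0) * xj b)
        - ((∑ b, xi a * (Dα a * σ b) * xj b) + (∑ b, xi a * (σ a * Dα b) * xj b)) := by
    intro a
    rw [← Finset.sum_add_distrib, ← Finset.sum_sub_distrib]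
    exact Finset.sum_congr rfl fun b _ => by ring
  have lhs_eq : ∑ a, ∑ b, xi a * ((if a = b then Dα a else 0) - (Dα a * σ b + σ a * Dα b)) * xj b
      = (∑ a, Dα a * xi a * xj a)
        - ((∑ a, Dα a * xi a) * (∑ b, σ b * xj b)
          + (∑ a, σ a * xi a) * (∑ b, Dα b * xj b)) := by
    rw [Finset.sum_congr rfl fun a _ => step a, Finset.sum_sub_distrib, Finset.sum_add_distrib,
      e1', e2, e3]
  have rhs_eq : ∑ t, Dα t * ((xi t - ∑ u, σ u * xi u) * (xj t - ∑ u, σ u * xj u))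
      = (∑ t, Dα t * xi t * xj t)
        - (∑ t, Dα t * xi t) * (∑ u, σ u * xj u)
        - (∑ u, σ u * xi u) * (∑ t, Dα t * xj t)
        + (∑ u, σ u * xi u) * (∑ u, σ u * xj u) * (∑ t, Dα t) := by
    have h : ∀ t, Dα t * ((xi t - ∑ u, σ u * xi u) * (xj t - ∑ u, σ u * xj u))
        = Dα t * xi t * xj t - (Dα t * xi t) * (∑ u, σ u * xj u)
          - (∑ u, σ u * xi u) * (Dα t * xj t)
          + (∑ u, σ u * xi u) * (∑ u, σ u * xj u) * Dα t := fun t => by ring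
    rw [Finset.sum_congr rfl fun t _ => h t, Finset.sum_add_distrib, Finset.sum_sub_distrib,
      Finset.sum_sub_distrib, ← Finset.sum_mul, ← Finset.mul_sum, ← Finset.mul_sum]
  rw [lhs_eq, rhs_eq, h0]
  ring

/-- coercion of a matrix to a Euclidean vector indexed by pairs -/
def toE' {d : ℕ} (A : Fin d → Fin d → ℝ) : EuclideanSpace ℝ (Fin d × Fin d) :=
  (WithLp.linearEquiv 2 ℝ ((Fin d × Fin d) → ℝ)).symm (fun p => A p.1 p.2)

lemma toE'_apply {d : ℕ} (A : Fin d → Fin d → ℝ) (p : Fin d × Fin d) :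
    toE' A p = A p.1 p.2 := rfl

lemma norm_toE' {d : ℕ} (A : Fin d → Fin d → ℝ) : ‖toE' A‖ = frob A := by
  rw [EuclideanSpace.norm_eq]
  unfold frob
  congr 1
  rw [Fintype.sum_prod_type]
  exact Finset.sum_congr rfl fun i _ => Finset.sum_congr rfl fun j _ => by
    rw [toE'_apply, Real.norm_eq_abs, sq_abs]

lemma toE'_sum {d T : ℕ} (c : Fin T → ℝ) (f : Fin T → Fin d → Fin d → ℝ) :
    toE' (fun i j => ∑ t, c t * f t i j) = ∑ t, c t • toE' (f t) := by
  unfold toE'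
  have h : (fun p : Fin d × Fin d => ∑ t, c t * f t p.1 p.2)
      = ∑ t, c t • (fun p : Fin d × Fin d => f t p.1 p.2) := by
    funext p
    simp [Finset.sum_apply, Pi.smul_apply, smul_eq_mul]
  calc (WithLp.linearEquiv 2 ℝ ((Fin d × Fin d) → ℝ)).symm
        (fun p : Fin d × Fin d => ∑ t, c t * f t p.1 p.2)
      = (WithLp.linearEquiv 2 ℝ ((Fin d × Fin d) → ℝ)).symm
        (∑ t, c t • (fun p : Fin d × Fin d => f t p.1 p.2)) := by rw [h]
    _ = ∑ t, c t • (WithLp.linearEquiv 2 ℝ ((Fin d × Fin d) → ℝ)).symm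
        (fun p : Fin d × Fin d => f t p.1 p.2) := by
          rw [map_sum]
          exact Finset.sum_congr rfl fun t _ => by rw [map_smul]

lemma frob_rank_one' {d : ℕ} (v : Fin d → ℝ) :
    frob (fun i j => v i * v j) = ∑ i, v i ^ 2 := by
  unfold frob
  have h : ∑ i, ∑ j, (v i * v j) ^ 2 = (∑ i, v i ^ 2) * (∑ j, v j ^ 2) := by
    rw [Finset.sum_mul_sum]
    exact Finset.sum_congr rfl fun i _ => Finset.sum_congr rfl fun j _ => by ring
  rw [h, Real.sqrt_mul_self (Finset.sum_nonneg fun i _ => sq_nonneg _)]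

/-- the derivative of `W ↦ M(X;W) = X J_s(Xᵀ W q) Xᵀ` in direction `Δ` equals
`∑_t (Dα[Δ])_t (X_t − μ)(X_t − μ)ᵀ` with `Dα[Δ] = J_s(Xᵀ W q) Xᵀ Δ q`, and its Frobenius
norm is at most `4 ‖Dα[Δ]‖₁ ≤ 8 ‖Δ‖_F`. -/
theorem softmax_covariance_derivative {d T : ℕ}
    (X : Fin d → Fin T → ℝ) (q : Fin d → ℝ)
    (hX : ∀ t, l2 (fun k => X k t) ≤ 1) (hq : l2 q ≤ 1)
    (W : Fin d → Fin d → ℝ) (Δ : Fin d → Fin d → ℝ) :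
    (let α : Fin T → ℝ := softmax (score X W q)
     let μ : Fin d → ℝ := fun i => ∑ t, α t * X i t
     let Dα : Fin T → ℝ := fun t => ∑ u, softmaxJac (score X W q) t u * score X Δ q u
     let DM : Fin d → Fin d → ℝ :=
       fun i j => ∑ t, Dα t * ((X i t - μ i) * (X j t - μ j))
     -- entrywise directional (Fréchet) derivative of W ↦ M(X;W)
     (∀ i j : Fin d,
        HasDerivAt (fun s : ℝ => Mmat X (W + s • Δ) q i j) (DM i j) 0) ∧
     -- ‖DM(W)[Δ]‖_F ≤ 4 ‖Dα[Δ]‖₁ ≤ 8 ‖Δ‖_F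
     frob DM ≤ 4 * l1 Dα ∧ 4 * l1 Dα ≤ 8 * frob Δ) := by
  intro α μ Dα DM
  -- abbreviations
  have hX2 : ∀ t, ∑ k, X k t ^ 2 ≤ 1 := by
    intro t
    have h := hX t
    unfold l2 at h
    nlinarith [Real.sq_sqrt (show (0:ℝ) ≤ ∑ k, X k t ^ 2 from
        Finset.sum_nonneg fun _ _ => sq_nonneg _),
      Real.sqrt_nonneg (∑ k, X k t ^ 2)]
  have hq2 : ∑ j, q j ^ 2 ≤ 1 := by
    unfold l2 at hq
    nlinarith [Real.sq_sqrt (show (0:ℝ) ≤ ∑ j, q j ^ 2 from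
        Finset.sum_nonneg fun _ _ => sq_nonneg _),
      Real.sqrt_nonneg (∑ j, q j ^ 2)]
  have hDα : ∀ t, Dα t = softmax (score X W q) t * score X Δ q t
      - softmax (score X W q) t * ∑ u, softmax (score X W q) u * score X Δ q u :=
    fun t => Dalpha_eq' (score X W q) (score X Δ q) t
  have hDα0 : ∑ t, Dα t = 0 := by
    rw [Finset.sum_congr rfl fun t _ => hDα t]
    exact sum_Dalpha_zero' _ _
  have hα_nonneg : ∀ t, 0 ≤ α t := fun t => softmax_nonneg' _ t
  have hfrobΔ_nonneg : 0 ≤ frob Δ := Real.sqrt_nonneg _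
  refine ⟨?_, ?_, ?_⟩
  · -- derivative
    intro i j
    have hsc : ∀ s : ℝ, score X (W + s • Δ) q
        = fun t => score X W q t + s * score X Δ q t :=
      fun s => funext fun t => score_add_smul' X W Δ q s t
    have hfun : (fun s : ℝ => Mmat X (W + s • Δ) q i j)
        = fun s : ℝ => ∑ a, ∑ b,
            X i a * softmaxJac (fun t => score X W q t + s * score X Δ q t) a b * X j b := by
      funext s
      simp only [Mmat, hsc]
    set z := score X W q with hz
    set c := score X Δ q with hc
    set Dd : Fin T → ℝ :=
      fun t => softmax z t * c t - softmax z t * ∑ u, softmax z u * c u with hDd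
    have hDd0 : ∑ t, Dd t = 0 := sum_Dalpha_zero' z c
    have hterm : ∀ a b : Fin T,
        HasDerivAt (fun s : ℝ => softmaxJac (fun t => z t + s * c t) a b)
          ((if a = b then Dd a else 0) - (Dd a * softmax z b + softmax z a * Dd b)) 0 := by
      intro a b
      have ha := softmax_hasDerivAt' z c a
      have hb := softmax_hasDerivAt' z c b
      have hz0 : (fun t => z t + (0:ℝ) * c t) = z := by funext t; ring
      have hprod := ha.fun_mul hb
      rw [hz0] at hprod
      have hdiag : HasDerivAt
          (fun s : ℝ => if a = b then softmax (fun t => z t + s * c t) a else 0)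
          (if a = b then Dd a else 0) 0 := by
        by_cases hab : a = b
        · simpa [hab] using ha
        · simpa [hab] using hasDerivAt_const (0:ℝ) (0:ℝ)
      have hsub := hdiag.fun_sub hprod
      simpa [softmaxJac] using hsub
    have hsum : HasDerivAt
        (fun s : ℝ => ∑ a, ∑ b, X i a * softmaxJac (fun t => z t + s * c t) a b * X j b)
        (∑ a, ∑ b, X i a * ((if a = b then Dd a else 0)
          - (Dd a * softmax z b + softmax z a * Dd b)) * X j b) 0 :=
      HasDerivAt.fun_sum fun a _ => HasDerivAt.fun_sum fun b _ =>
        ((hterm a b).const_mul (X i a)).mul_const (X j b)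
    have halg := alg_identity' (fun t => X i t) (fun t => X j t) (softmax z) Dd hDd0
    have hDM : DM i j = ∑ t, Dd t * ((X i t - ∑ u, softmax z u * X i u)
        * (X j t - ∑ u, softmax z u * X j u)) := by
      show (∑ t, Dα t * ((X i t - μ i) * (X j t - μ j))) = _
      refine Finset.sum_congr rfl fun t _ => ?_
      rw [hDα t]
    rw [hfun, hDM, ← halg]
    exact hsum
  · -- frob DM ≤ 4 * l1 Dα
    have hμsq : ∀ i, μ i ^ 2 ≤ ∑ t, α t * X i t ^ 2 ∨ T = 0 := by
      intro i
      rcases Nat.eq_zero_or_pos T with hT | hT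
      · exact Or.inr hT
      · left
        have cs := Finset.sum_mul_sq_le_sq_mul_sq Finset.univ
          (fun t => Real.sqrt (α t)) (fun t => Real.sqrt (α t) * X i t)
        have : Nonempty (Fin T) := ⟨⟨0, hT⟩⟩
        have hα_sum : ∑ t, α t = 1 := sum_softmax' _
        rw [Finset.sum_congr rfl fun t _ => show Real.sqrt (α t) * (Real.sqrt (α t) * X i t)
              = α t * X i t by rw [← mul_assoc, Real.mul_self_sqrt (hα_nonneg t)],
          Finset.sum_congr rfl (fun t (_ : t ∈ Finset.univ) => show Real.sqrt (α t) ^ 2 = α t from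
            Real.sq_sqrt (hα_nonneg t)),
          Finset.sum_congr rfl (fun t (_ : t ∈ Finset.univ) =>
            show (Real.sqrt (α t) * X i t) ^ 2 = α t * X i t ^ 2 by
              rw [mul_pow, Real.sq_sqrt (hα_nonneg t)]),
          hα_sum, one_mul] at cs
        exact cs
    have hμ2 : ∑ i, μ i ^ 2 ≤ 1 := by
      rcases Nat.eq_zero_or_pos T with hT | hT
      · have : ∀ i, μ i = 0 := by
          intro i
          show (∑ t, α t * X i t) = 0
          have : IsEmpty (Fin T) := by rw [hT]; exact Fin.isEmpty
          simp
        calc ∑ i, μ i ^ 2 = ∑ i : Fin d, (0:ℝ) := by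
              exact Finset.sum_congr rfl fun i _ => by rw [this i]; ring
          _ = 0 := Finset.sum_const_zero
          _ ≤ 1 := zero_le_one
      · have : Nonempty (Fin T) := ⟨⟨0, hT⟩⟩
        have hα_sum : ∑ t, α t = 1 := sum_softmax' _
        calc ∑ i, μ i ^ 2 ≤ ∑ i, ∑ t, α t * X i t ^ 2 := by
              refine Finset.sum_le_sum fun i _ => ?_
              rcases hμsq i with h | h
              · exact h
              · omega
          _ = ∑ t, ∑ i, α t * X i t ^ 2 := Finset.sum_comm
          _ = ∑ t, α t * ∑ i, X i t ^ 2 := Finset.sum_congr rfl fun t _ =>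
              (Finset.mul_sum _ _ _).symm
          _ ≤ ∑ t, α t * 1 := Finset.sum_le_sum fun t _ =>
              mul_le_mul_of_nonneg_left (hX2 t) (hα_nonneg t)
          _ = 1 := by
              rw [Finset.sum_congr rfl fun t (_ : t ∈ Finset.univ) => mul_one (α t), hα_sum]
    have hv4 : ∀ t, ∑ i, (X i t - μ i) ^ 2 ≤ 4 := by
      intro t
      have h1 := hX2 t
      have cs := Finset.sum_mul_sq_le_sq_mul_sq Finset.univ (fun i => X i t) (fun i => μ i)
      have expand : ∑ i, (X i t - μ i) ^ 2
          = ∑ i, X i t ^ 2 - 2 * ∑ i, X i t * μ i + ∑ i, μ i ^ 2 := by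
        rw [Finset.sum_congr rfl fun i (_ : i ∈ Finset.univ) =>
            show (X i t - μ i) ^ 2 = X i t ^ 2 - 2 * (X i t * μ i) + μ i ^ 2 by ring,
          Finset.sum_add_distrib, Finset.sum_sub_distrib, ← Finset.mul_sum]
      rw [expand]
      nlinarith [sq_nonneg ((∑ i, X i t * μ i) + 1),
        Finset.sum_nonneg (fun i (_ : i ∈ (Finset.univ : Finset (Fin d))) => sq_nonneg (μ i)),
        Finset.sum_nonneg (fun i (_ : i ∈ (Finset.univ : Finset (Fin d))) => sq_nonneg (X i t))]
    calc frob DM = ‖toE' DM‖ := (norm_toE' DM).symm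
      _ = ‖∑ t, Dα t • toE' (fun i j => (X i t - μ i) * (X j t - μ j))‖ := by
          rw [← toE'_sum Dα (fun t i j => (X i t - μ i) * (X j t - μ j))]
      _ ≤ ∑ t, ‖Dα t • toE' (fun i j => (X i t - μ i) * (X j t - μ j))‖ :=
          norm_sum_le _ _
      _ = ∑ t, |Dα t| * frob (fun i j => (X i t - μ i) * (X j t - μ j)) := by
          refine Finset.sum_congr rfl fun t _ => ?_
          rw [norm_smul, Real.norm_eq_abs, norm_toE']
      _ ≤ ∑ t, |Dα t| * 4 := by
          refine Finset.sum_le_sum fun t _ => ?_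
          refine mul_le_mul_of_nonneg_left ?_ (abs_nonneg _)
          rw [frob_rank_one' (fun i => X i t - μ i)]
          exact hv4 t
      _ = 4 * l1 Dα := by
          rw [← Finset.sum_mul]
          unfold l1
          ring
  · -- 4 * l1 Dα ≤ 8 * frob Δ
    have hcu : ∀ u, |score X Δ q u| ≤ frob Δ := by
      intro u
      have hw : ∀ i, (∑ j, Δ i j * q j) ^ 2 ≤ ∑ j, Δ i j ^ 2 := by
        intro i
        have cs := Finset.sum_mul_sq_le_sq_mul_sq Finset.univ (fun j => Δ i j) q
        nlinarith [Finset.sum_nonneg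
          (fun j (_ : j ∈ (Finset.univ : Finset (Fin d))) => sq_nonneg (Δ i j))]
      have cs := Finset.sum_mul_sq_le_sq_mul_sq Finset.univ (fun i => X i u)
        (fun i => ∑ j, Δ i j * q j)
      have h2 : ∑ i, (∑ j, Δ i j * q j) ^ 2 ≤ ∑ i, ∑ j, Δ i j ^ 2 :=
        Finset.sum_le_sum fun i _ => hw i
      have h3 : frob Δ ^ 2 = ∑ i, ∑ j, Δ i j ^ 2 := Real.sq_sqrt
        (Finset.sum_nonneg fun i _ => Finset.sum_nonneg fun j _ => sq_nonneg _)
      have h1 : (score X Δ q u) ^ 2 ≤ frob Δ ^ 2 := by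
        have hXu := hX2 u
        have hwnn : (0:ℝ) ≤ ∑ i, (∑ j, Δ i j * q j) ^ 2 :=
          Finset.sum_nonneg fun i _ => sq_nonneg _
        unfold score
        nlinarith
      calc |score X Δ q u| = Real.sqrt ((score X Δ q u) ^ 2) :=
            (Real.sqrt_sq_eq_abs _).symm
        _ ≤ Real.sqrt (frob Δ ^ 2) := Real.sqrt_le_sqrt h1
        _ = frob Δ := Real.sqrt_sq hfrobΔ_nonneg
    have hl1 : l1 Dα ≤ 2 * frob Δ := by
      rcases Nat.eq_zero_or_pos T with hT | hT
      · have : IsEmpty (Fin T) := by rw [hT]; exact Fin.isEmpty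
        unfold l1
        simp only [Finset.univ_eq_empty, Finset.sum_empty]
        linarith
      · have : Nonempty (Fin T) := ⟨⟨0, hT⟩⟩
        have hα_sum : ∑ t, softmax (score X W q) t = 1 := sum_softmax' _
        have hSc : |∑ u, softmax (score X W q) u * score X Δ q u| ≤ frob Δ := by
          calc |∑ u, softmax (score X W q) u * score X Δ q u|
              ≤ ∑ u, |softmax (score X W q) u * score X Δ q u| :=
                Finset.abs_sum_le_sum_abs _ _
            _ = ∑ u, softmax (score X W q) u * |score X Δ q u| :=
                Finset.sum_congr rfl fun u _ => by
                  rw [abs_mul, abs_of_nonneg (softmax_nonneg' _ u)]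
            _ ≤ ∑ u, softmax (score X W q) u * frob Δ :=
                Finset.sum_le_sum fun u _ =>
                  mul_le_mul_of_nonneg_left (hcu u) (softmax_nonneg' _ u)
            _ = frob Δ := by rw [← Finset.sum_mul, hα_sum, one_mul]
        calc l1 Dα = ∑ t, |Dα t| := rfl
          _ ≤ ∑ t, softmax (score X W q) t * (2 * frob Δ) := by
              refine Finset.sum_le_sum fun t _ => ?_
              rw [hDα t, show softmax (score X W q) t * score X Δ q t
                  - softmax (score X W q) t * ∑ u, softmax (score X W q) u * score X Δ q u
                  = softmax (score X W q) t * (score X Δ q t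
                    - ∑ u, softmax (score X W q) u * score X Δ q u) by ring,
                abs_mul, abs_of_nonneg (softmax_nonneg' _ t)]
              refine mul_le_mul_of_nonneg_left ?_ (softmax_nonneg' _ t)
              have habs : |score X Δ q t - ∑ u, softmax (score X W q) u * score X Δ q u|
                  ≤ |score X Δ q t| + |∑ u, softmax (score X W q) u * score X Δ q u| := by
                have := abs_add_le (score X Δ q t)
                  (-(∑ u, softmax (score X W q) u * score X Δ q u))
                simpa [sub_eq_add_neg] using this
              calc |score X Δ q t - ∑ u, softmax (score X W q) u * score X Δ q u|
                  ≤ |score X Δ q t| + |∑ u, softmax (score X W q) u * score X Δ q u| := habs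
                _ ≤ frob Δ + frob Δ := add_le_add (hcu t) hSc
                _ = 2 * frob Δ := by ring
          _ = 2 * frob Δ := by rw [← Finset.sum_mul, hα_sum, one_mul]
    linarith
end
end
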